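/- Any filter combination F(x) that contains more than one equality-to-a-constant conjunct is redundant: a combination containing two positive equalities to distinct constants, or a positive and a negative equality, contains redundant or unsatisfiable conjuncts; and a combination whose equality conjuncts are all negative is equivalent to a set of combinations each containing at most one equality-to-a-constant conjunct (using the fresh shape ν defined by ν(x) ↔ ⋀_{c∈C} x ≠ c for the set C of known constants). -/

import Mathlib

/-!
STATEMENT 11.  Any filter combination containing more than one
equality-to-a-constant conjunct is redundant (using the fresh shape `ν`
axiomatised by `ν(x) ↔ ⋀_{c ∈ C} x ≠ c` over the set `C` of known
constants).
-/

namespace SHACL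

/-- RDF terms. -/
abbrev Term := ℕ

/-- Names of the monadic filter predicates. -/
abbrev FName := ℕ

/-- Filter literals: positive and negative equality to a constant, the fresh
shape `ν`, and positive/negative occurrences of monadic filter predicates. -/
inductive FLit
  | eq (c : Term)
  | ne (c : Term)
  | nu
  | fPos (F : FName)
  | fNeg (F : FName)
deriving DecidableEq

/-- A filter combination: a conjunction of pairwise distinct filter
literals. -/
abbrev FComb := Finset FLit

/-- Truth of a filter literal at an RDF term; `C` is the finite set of known
constants (distinct constant symbols denote distinct RDF terms, by the unique
name assumption) and `ν(x)` holds iff `x` is none of the known constants. -/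
def FLit.holds (C : Finset Term) (fi : FName → Term → Prop) (x : Term) :
    FLit → Prop
  | .eq c => x = c
  | .ne c => x ≠ c
  | .nu => x ∉ C
  | .fPos F => fi F x
  | .fNeg F => ¬ fi F x

/-- `γ(F(x))`: the set of RDF terms satisfying a filter combination. -/
def gammaSet (C : Finset Term) (fi : FName → Term → Prop) (comb : FComb) :
    Set Term :=
  {x | ∀ l ∈ comb, l.holds C fi x}

/-- Whether a literal is an equality-to-a-constant conjunct (positive or
negated). -/
def FLit.isEq : FLit → Bool
  | .eq _ => true
  | .ne _ => true
  | _ => false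

/-- Number of equality-to-a-constant conjuncts of a combination. -/
def eqCount (comb : FComb) : ℕ := (comb.filter (fun l => l.isEq)).card

/-- Redundancy of a filter combination: either a proper subset of its
conjuncts has the same set of satisfiers; or it is unsatisfiable while a
proper subset of it is already unsatisfiable; or it is equivalent (same
satisfying RDF terms) to a finite set of filter combinations each containing
at most one equality-to-a-constant conjunct. -/
def Redundant (C : Finset Term) (fi : FName → Term → Prop) (comb : FComb) :
    Prop :=
  (∃ comb' : FComb, comb' ⊂ comb ∧ gammaSet C fi comb' = gammaSet C fi comb) ∨
  (gammaSet C fi comb = ∅ ∧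
    ∃ comb' : FComb, comb' ⊂ comb ∧ gammaSet C fi comb' = ∅) ∨
  (∃ S : Finset FComb, (∀ c ∈ S, eqCount c ≤ 1) ∧
    gammaSet C fi comb = ⋃ c ∈ S, gammaSet C fi c)

/-!
A positive conjunct `x = c` pins `x` down: together with another `x = c'` or with `x ≠ c` the
combination is unsatisfiable, hence equivalent to the empty set of combinations, and any
`x ≠ c'` with `c' ≠ c` can be dropped. Without positive equalities, split on whether `x` is a
known constant: `ν` covers the case that it is not, and a known constant `c` that no conjunct
`x ≠ c` excludes contributes the combination with `x = c` in place of all the inequalities.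
-/

variable {C : Finset Term} {fi : FName → Term → Prop}

lemma mem_gammaSet {s : FComb} {x : Term} :
    x ∈ gammaSet C fi s ↔ ∀ l ∈ s, l.holds C fi x := Iff.rfl

lemma mem_gammaSet_insert {l : FLit} {s : FComb} {x : Term} :
    x ∈ gammaSet C fi (insert l s) ↔ l.holds C fi x ∧ x ∈ gammaSet C fi s :=
  Finset.forall_mem_insert _ _ _

lemma gammaSet_eq_empty_of_eq_mem_of_eq_mem {s : FComb} {c c' : Term}
    (hc : .eq c ∈ s) (hc' : .eq c' ∈ s) (hne : c ≠ c') : gammaSet C fi s = ∅ :=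
  Set.eq_empty_of_forall_notMem fun _ hx => hne <| (hx _ hc).symm.trans (hx _ hc')

lemma gammaSet_eq_empty_of_eq_mem_of_ne_mem {s : FComb} {c : Term}
    (hc : .eq c ∈ s) (hc' : .ne c ∈ s) : gammaSet C fi s = ∅ :=
  Set.eq_empty_of_forall_notMem fun _ hx => hx _ hc' (hx _ hc)

lemma gammaSet_erase_ne_of_eq_mem {s : FComb} {c c' : Term}
    (hc : .eq c ∈ s) (hne : c' ≠ c) : gammaSet C fi (s.erase (.ne c')) = gammaSet C fi s := by
  ext x
  simp only [mem_gammaSet, Finset.mem_erase]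
  refine ⟨fun hx l hl => ?_, fun hx l hl => hx l hl.2⟩
  by_cases hl' : l = .ne c'
  · subst hl'
    have hxc : x = c := hx _ ⟨by simp, hc⟩
    exact fun hxc' => hne (hxc'.symm.trans hxc)
  · exact hx l ⟨hl', hl⟩

lemma redundant_of_gammaSet_eq_empty {s : FComb} (h : gammaSet C fi s = ∅) :
    Redundant C fi s :=
  Or.inr <| Or.inr ⟨∅, by simp, by simp [h]⟩

lemma redundant_of_eq_mem {s : FComb} {c : Term} (hc : .eq c ∈ s) (h : 1 < eqCount s) :
    Redundant C fi s := by
  obtain ⟨l, hl, hlc⟩ := Finset.exists_mem_ne h (FLit.eq c)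
  obtain ⟨hls, hlEq⟩ := Finset.mem_filter.mp hl
  cases l with
  | eq c' =>
    exact redundant_of_gammaSet_eq_empty <|
      gammaSet_eq_empty_of_eq_mem_of_eq_mem hc hls fun h => hlc (congrArg FLit.eq h.symm)
  | ne c' =>
    by_cases hcc' : c' = c
    · subst hcc'
      exact redundant_of_gammaSet_eq_empty (gammaSet_eq_empty_of_eq_mem_of_ne_mem hc hls)
    · exact Or.inl ⟨_, Finset.erase_ssubset hls, gammaSet_erase_ne_of_eq_mem hc hcc'⟩
  | _ => cases hlEq

def nonEqPart (s : FComb) : FComb := s.filter fun l => !l.isEq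

lemma eqCount_insert_nonEqPart_le_one (l : FLit) (s : FComb) :
    eqCount (insert l (nonEqPart s)) ≤ 1 :=
  Finset.card_le_one.mpr fun a ha b hb => by
    simp only [nonEqPart, Finset.mem_filter, Finset.mem_insert] at ha hb
    grind

def nuSplit (C : Finset Term) (s : FComb) : Finset FComb :=
  insert (insert .nu (nonEqPart s))
    ((C.filter fun c => .ne c ∉ s).image fun c => insert (.eq c) (nonEqPart s))

lemma eqCount_le_one_of_mem_nuSplit {s t : FComb} (ht : t ∈ nuSplit C s) : eqCount t ≤ 1 := by
  simp only [nuSplit, Finset.mem_insert, Finset.mem_image] at ht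
  obtain rfl | ⟨c, -, rfl⟩ := ht <;> exact eqCount_insert_nonEqPart_le_one _ _

lemma mem_gammaSet_iff_of_forall_eq_notMem {s : FComb} (hpos : ∀ c, .eq c ∉ s) {x : Term} :
    x ∈ gammaSet C fi s ↔ x ∈ gammaSet C fi (nonEqPart s) ∧ ∀ c, .ne c ∈ s → x ≠ c := by
  simp only [mem_gammaSet, nonEqPart, Finset.mem_filter]
  refine ⟨fun hx => ⟨fun l hl => hx l hl.1, fun c hc => hx _ hc⟩, fun ⟨hx, hne⟩ l hl => ?_⟩
  cases l with
  | eq c => exact absurd hl (hpos c)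
  | ne c => exact hne c hl
  | _ => exact hx _ ⟨hl, rfl⟩

lemma gammaSet_eq_biUnion_nuSplit {s : FComb} (hpos : ∀ c, .eq c ∉ s)
    (hC : ∀ c, .ne c ∈ s → c ∈ C) :
    gammaSet C fi s = ⋃ t ∈ nuSplit C s, gammaSet C fi t := by
  ext x
  simp only [mem_gammaSet_iff_of_forall_eq_notMem hpos, Set.mem_iUnion, exists_prop, nuSplit,
    Finset.mem_insert, Finset.mem_image, Finset.mem_filter]
  constructor
  · rintro ⟨hx, hne⟩
    by_cases hxC : x ∈ C
    · exact ⟨_, Or.inr ⟨x, ⟨hxC, fun h => hne x h rfl⟩, rfl⟩, mem_gammaSet_insert.mpr ⟨rfl, hx⟩⟩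
    · exact ⟨_, Or.inl rfl, mem_gammaSet_insert.mpr ⟨hxC, hx⟩⟩
  · rintro ⟨t, rfl | ⟨c, ⟨-, hcs⟩, rfl⟩, hx⟩ <;> obtain ⟨hl, hx⟩ := mem_gammaSet_insert.mp hx
    · exact ⟨hx, fun c hc hxc => hl (hxc ▸ hC c hc)⟩
    · exact ⟨hx, fun c' hc' hxc' => hcs (hl ▸ hxc' ▸ hc')⟩

/-- Lemma on equality-to-a-constant: any filter combination
whose constants are among the known constants `C` and which contains more
than one equality-to-a-constant conjunct is redundant. -/
theorem equality_filter_redundant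
    (C : Finset Term) (fi : FName → Term → Prop) (comb : FComb)
    (hC : ∀ l ∈ comb, ∀ c : Term, (l = FLit.eq c ∨ l = FLit.ne c) → c ∈ C)
    (h : 1 < eqCount comb) :
    Redundant C fi comb := by
  by_cases hpos : ∃ c, FLit.eq c ∈ comb
  · obtain ⟨c, hc⟩ := hpos
    exact redundant_of_eq_mem hc h
  · push Not at hpos
    exact Or.inr <| Or.inr ⟨nuSplit C comb, fun t ht => eqCount_le_one_of_mem_nuSplit ht,
      gammaSet_eq_biUnion_nuSplit hpos fun c hc => hC _ hc c (Or.inr rfl)⟩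

end SHACL
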